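/- Let α_i, β_i ∈ ℝ³, k_α, k_β, l_α, l_β > 0, c_ω ≥ 0 and ε > 0. Then for all E_α, E_β, E_b ∈ ℝ³ and all Ω ∈ ℝ³ with ‖Ω‖ ≤ c_ω, with u := (l_α/k_α) α_i × E_α + (l_β/k_β) β_i × E_β and D as defined from the error system: |⟨u, D⟩| ≤ (ε/2)‖E_b‖² + (2 c_ω²/ε)‖u‖² + (4/ε)((l_α²/k_α²)‖α_i‖⁴ + (l_β²/k_β²)‖β_i‖⁴)‖u‖² + (2 l_α² ‖α_i‖²/(ε k_α²))‖E_α‖² ‖u‖² + (2 l_β² ‖β_i‖²/(ε k_β²))‖E_β‖² ‖u‖². -/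

import Mathlib

open scoped RealInnerProductSpace
open Matrix Filter

noncomputable section

/-- ℝ³ with the Euclidean norm and inner product. -/
abbrev V3 : Type := EuclideanSpace ℝ (Fin 3)

/-- Identity identification of `V3` with plain functions `Fin 3 → ℝ`. -/
def toF (v : V3) : Fin 3 → ℝ := v

/-- Identity identification of plain functions `Fin 3 → ℝ` with `V3`. -/
def toE (v : Fin 3 → ℝ) : V3 := WithLp.toLp 2 v

/-- The cross product on ℝ³. -/
def cross (v w : V3) : V3 := toE (crossProduct (toF v) (toF w))

/-- The skew-symmetric matrix `v_×` with `v_× x = v × x`. -/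
def skew (v : V3) : Matrix (Fin 3) (Fin 3) ℝ :=
  !![0, -(toF v 2), toF v 1; toF v 2, 0, -(toF v 0); -(toF v 1), toF v 0, 0]

/-- Matrix-vector multiplication on `V3`. -/
def mulVecE (M : Matrix (Fin 3) (Fin 3) ℝ) (x : V3) : V3 := toE (M.mulVec (toF x))

/-- The quadratic part of the Lyapunov function,
`V₁ = (1/2)(lα‖Eα‖² + lβ‖Eβ‖² + ‖Eb‖²)`. -/
def V1 (lα lβ : ℝ) (Eα Eβ Eb : V3) : ℝ :=
  (1 / 2) * (lα * ‖Eα‖ ^ 2 + lβ * ‖Eβ‖ ^ 2 + ‖Eb‖ ^ 2)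

/-- `u_{αβ} = (lα/kα) αi × Eα + (lβ/kβ) βi × Eβ`. -/
def uab (αi βi : V3) (kα kβ lα lβ : ℝ) (Eα Eβ : V3) : V3 :=
  (lα / kα) • cross αi Eα + (lβ / kβ) • cross βi Eβ

/-- `D`, the time derivative of `Eb − u_{αβ}` along the error system. -/
def Dvec (αi βi : V3) (kα kβ lα lβ : ℝ) (Eα Eβ Eb Ω : V3) : V3 :=
  (cross Ω Eb + lα • cross Eα αi + lβ • cross Eβ βi)
    - (lα / kα) • cross αi (cross Eb (αi + Eα) - kα • Eα)
    - (lβ / kβ) • cross βi (cross Eb (βi + Eβ) - kβ • Eβ)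

/-!
Once the damping terms cancel the innovation terms, `D` is linear in `Eb`, and
`‖D‖ ≤ ‖Eb‖ S` with
`S = ‖Ω‖ + |lα/kα| ‖αi‖² + |lβ/kβ| ‖βi‖² + |lα/kα| ‖αi‖ ‖Eα‖ + |lβ/kβ| ‖βi‖ ‖Eβ‖`.
Hence `|⟨u, D⟩| ≤ ‖Eb‖ (‖u‖ S) ≤ (ε/2) ‖Eb‖² + ‖u‖² S² / (2ε)` by Young's inequality, and a
weighted Cauchy–Schwarz inequality bounds `S²` by a weighted sum of the squares of its terms.
-/

lemma toF_cross (v w : V3) : toF (cross v w) = toF v ⨯₃ toF w := rfl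

lemma norm_sq_eq_dotProduct (v : V3) : ‖v‖ ^ 2 = toF v ⬝ᵥ toF v := by
  rw [← real_inner_self_eq_norm_sq, EuclideanSpace.inner_eq_star_dotProduct]; rfl

lemma inner_eq_dotProduct (v w : V3) : ⟪v, w⟫ = toF v ⬝ᵥ toF w := by
  rw [EuclideanSpace.inner_eq_star_dotProduct, dotProduct_comm]; rfl

lemma norm_cross_sq (v w : V3) : ‖cross v w‖ ^ 2 = ‖v‖ ^ 2 * ‖w‖ ^ 2 - ⟪v, w⟫ ^ 2 := by
  simp only [norm_sq_eq_dotProduct, inner_eq_dotProduct, toF_cross]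
  rw [cross_dot_cross, dotProduct_comm (toF w) (toF v)]
  ring

lemma norm_cross_le (v w : V3) : ‖cross v w‖ ≤ ‖v‖ * ‖w‖ := by
  refine le_of_sq_le_sq ?_ (by positivity)
  rw [norm_cross_sq, mul_pow]
  nlinarith [sq_nonneg ⟪v, w⟫]

lemma norm_cross_cross_le (a b c : V3) : ‖cross a (cross b c)‖ ≤ ‖a‖ * ‖b‖ * ‖c‖ :=
  calc ‖cross a (cross b c)‖ ≤ ‖a‖ * ‖cross b c‖ := norm_cross_le a _
    _ ≤ ‖a‖ * (‖b‖ * ‖c‖) := by gcongr; exact norm_cross_le b c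
    _ = ‖a‖ * ‖b‖ * ‖c‖ := (mul_assoc _ _ _).symm

lemma cross_swap (v w : V3) : cross w v = -cross v w := by
  rw [cross, cross, ← cross_anticomm]; rfl

lemma cross_sub_right (v w x : V3) : cross v (w - x) = cross v w - cross v x := by
  rw [cross, show toF (w - x) = toF w - toF x from rfl, map_sub]; rfl

lemma cross_smul_right (v w : V3) (c : ℝ) : cross v (c • w) = c • cross v w := by
  rw [cross, show toF (c • w) = c • toF w from rfl, map_smul]; rfl

/-- The term `-kα • Eα` of `Ėα` cancels `lα • Eα × αi`, and likewise for `β`. -/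
lemma Dvec_eq (αi βi : V3) {kα kβ : ℝ} (lα lβ : ℝ) (hkα : kα ≠ 0) (hkβ : kβ ≠ 0)
    (Eα Eβ Eb Ω : V3) :
    Dvec αi βi kα kβ lα lβ Eα Eβ Eb Ω
      = cross Ω Eb - (lα / kα) • cross αi (cross Eb (αi + Eα))
        - (lβ / kβ) • cross βi (cross Eb (βi + Eβ)) := by
  simp only [Dvec, cross_sub_right, cross_smul_right, cross_swap Eα, cross_swap Eβ]
  match_scalars <;> field_simp <;> ring

lemma norm_Dvec_le (αi βi : V3) {kα kβ : ℝ} (lα lβ : ℝ) (hkα : kα ≠ 0) (hkβ : kβ ≠ 0)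
    (Eα Eβ Eb Ω : V3) :
    ‖Dvec αi βi kα kβ lα lβ Eα Eβ Eb Ω‖
      ≤ ‖Eb‖ * (‖Ω‖ + |lα / kα| * ‖αi‖ ^ 2 + |lβ / kβ| * ‖βi‖ ^ 2
        + |lα / kα| * ‖αi‖ * ‖Eα‖ + |lβ / kβ| * ‖βi‖ * ‖Eβ‖) := by
  have hα := norm_cross_cross_le αi Eb (αi + Eα)
  have hβ := norm_cross_cross_le βi Eb (βi + Eβ)
  grw [norm_add_le] at hα hβ
  rw [Dvec_eq αi βi lα lβ hkα hkβ]
  grw [norm_sub_le, norm_sub_le, norm_smul, norm_smul, norm_cross_le, hα, hβ]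
  simp only [Real.norm_eq_abs]
  exact le_of_eq (by ring)

lemma mul_le_half_mul_sq_add_sq_div {ε : ℝ} (hε : 0 < ε) (a b : ℝ) :
    a * b ≤ ε / 2 * a ^ 2 + b ^ 2 / (2 * ε) := by
  have h : ε / 2 * a ^ 2 + b ^ 2 / (2 * ε) - a * b = (ε * a - b) ^ 2 / (2 * ε) := by
    field_simp; ring
  linarith [div_nonneg (sq_nonneg (ε * a - b)) (by positivity : (0 : ℝ) ≤ 2 * ε)]

/-- Cauchy–Schwarz with weights `4, 8, 8, 4, 4`, whose reciprocals sum to `1`. -/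
lemma sq_add_five_le (a b c d e : ℝ) :
    (a + b + c + d + e) ^ 2 ≤ 4 * a ^ 2 + 8 * b ^ 2 + 8 * c ^ 2 + 4 * d ^ 2 + 4 * e ^ 2 := by
  nlinarith [sq_nonneg (a - 2 * b), sq_nonneg (a - 2 * c), sq_nonneg (a - d), sq_nonneg (a - e),
    sq_nonneg (b - c), sq_nonneg (2 * b - d), sq_nonneg (2 * b - e), sq_nonneg (2 * c - d),
    sq_nonneg (2 * c - e), sq_nonneg (d - e)]

theorem abs_inner_u_D_bound_general
    (αi βi : V3) (kα kβ lα lβ : ℝ)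
    (hkα : 0 < kα) (hkβ : 0 < kβ)
    (cω : ℝ) (ε : ℝ) (hε : 0 < ε) :
    ∀ Eα Eβ Eb Ω : V3, ‖Ω‖ ≤ cω →
      |⟪uab αi βi kα kβ lα lβ Eα Eβ, Dvec αi βi kα kβ lα lβ Eα Eβ Eb Ω⟫|
        ≤ (ε / 2) * ‖Eb‖ ^ 2
          + (2 * cω ^ 2 / ε) * ‖uab αi βi kα kβ lα lβ Eα Eβ‖ ^ 2
          + (4 / ε) * ((lα ^ 2 / kα ^ 2) * ‖αi‖ ^ 4 + (lβ ^ 2 / kβ ^ 2) * ‖βi‖ ^ 4)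
              * ‖uab αi βi kα kβ lα lβ Eα Eβ‖ ^ 2
          + (2 * lα ^ 2 * ‖αi‖ ^ 2 / (ε * kα ^ 2)) * ‖Eα‖ ^ 2
              * ‖uab αi βi kα kβ lα lβ Eα Eβ‖ ^ 2
          + (2 * lβ ^ 2 * ‖βi‖ ^ 2 / (ε * kβ ^ 2)) * ‖Eβ‖ ^ 2
              * ‖uab αi βi kα kβ lα lβ Eα Eβ‖ ^ 2 := by
  intro Eα Eβ Eb Ω hΩ
  set u := uab αi βi kα kβ lα lβ Eα Eβ
  set S := cω + |lα / kα| * ‖αi‖ ^ 2 + |lβ / kβ| * ‖βi‖ ^ 2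
    + |lα / kα| * ‖αi‖ * ‖Eα‖ + |lβ / kβ| * ‖βi‖ * ‖Eβ‖
  calc |⟪u, Dvec αi βi kα kβ lα lβ Eα Eβ Eb Ω⟫|
      ≤ ‖u‖ * ‖Dvec αi βi kα kβ lα lβ Eα Eβ Eb Ω‖ := abs_real_inner_le_norm _ _
    _ ≤ ‖u‖ * (‖Eb‖ * S) := by grw [norm_Dvec_le αi βi lα lβ hkα.ne' hkβ.ne', hΩ]
    _ = ‖Eb‖ * (‖u‖ * S) := mul_left_comm _ _ _
    _ ≤ ε / 2 * ‖Eb‖ ^ 2 + ‖u‖ ^ 2 * S ^ 2 / (2 * ε) := by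
      rw [← mul_pow]; exact mul_le_half_mul_sq_add_sq_div hε _ _
    _ ≤ ε / 2 * ‖Eb‖ ^ 2 + ‖u‖ ^ 2 * (4 * cω ^ 2 + 8 * (|lα / kα| * ‖αi‖ ^ 2) ^ 2
          + 8 * (|lβ / kβ| * ‖βi‖ ^ 2) ^ 2 + 4 * (|lα / kα| * ‖αi‖ * ‖Eα‖) ^ 2
          + 4 * (|lβ / kβ| * ‖βi‖ * ‖Eβ‖) ^ 2) / (2 * ε) := by
      grw [sq_add_five_le]
    _ = _ := by
      simp only [mul_pow, sq_abs, div_pow]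
      field_simp
      ring

/-- Bound on `|⟨u, D⟩|` obtained from Young's inequality. -/
theorem abs_inner_u_D_bound
    (αi βi : V3) (kα kβ lα lβ : ℝ)
    (hkα : 0 < kα) (hkβ : 0 < kβ) (hlα : 0 < lα) (hlβ : 0 < lβ)
    (cω : ℝ) (hcω : 0 ≤ cω) (ε : ℝ) (hε : 0 < ε) :
    ∀ Eα Eβ Eb Ω : V3, ‖Ω‖ ≤ cω →
      |⟪uab αi βi kα kβ lα lβ Eα Eβ, Dvec αi βi kα kβ lα lβ Eα Eβ Eb Ω⟫|
        ≤ (ε / 2) * ‖Eb‖ ^ 2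
          + (2 * cω ^ 2 / ε) * ‖uab αi βi kα kβ lα lβ Eα Eβ‖ ^ 2
          + (4 / ε) * ((lα ^ 2 / kα ^ 2) * ‖αi‖ ^ 4 + (lβ ^ 2 / kβ ^ 2) * ‖βi‖ ^ 4)
              * ‖uab αi βi kα kβ lα lβ Eα Eβ‖ ^ 2
          + (2 * lα ^ 2 * ‖αi‖ ^ 2 / (ε * kα ^ 2)) * ‖Eα‖ ^ 2
              * ‖uab αi βi kα kβ lα lβ Eα Eβ‖ ^ 2
          + (2 * lβ ^ 2 * ‖βi‖ ^ 2 / (ε * kβ ^ 2)) * ‖Eβ‖ ^ 2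
              * ‖uab αi βi kα kβ lα lβ Eα Eβ‖ ^ 2 :=
  abs_inner_u_D_bound_general αi βi kα kβ lα lβ hkα hkβ cω ε hε
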